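/- For all natural numbers n and k with 2 ≤ k ≤ n, R_{n,k} − 2 R_{n,k−1} + R_{n,k−2} < 0; i.e. k ↦ R_{n,k} is strictly concave. -/

import Mathlib

/-!
Write `cubeRes n k = (2 / n) * ∑_{j < k} a j` with `a j = T j / (2 ^ n * C(n-1, j))` (`cubeResStep`),
where `T j = ∑_{i = j+1}^{n} C(n, i)` is an upper binomial tail. The second difference at `k = j + 2` is
`(2 / n) * (a (j+1) - a j)`, so it suffices that `a` strictly decreases on `j + 2 ≤ n`. Shifting
the index of `T (j+1)` by one, this follows termwise from
`C(n-1, j) * C(n, i+1) ≤ C(n-1, j+1) * C(n, i)` for `j < i < n` (compare the ratios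
`(n - i) / (i + 1) ≤ (n - 1 - j) / (j + 1)`), while the term `C(n, n)` of `T j` has no partner
and makes the inequality strict.
-/

/-- Resistance between vertices at Hamming distance `k` in the `n`-cube of unit resistors. -/
noncomputable def cubeRes (n k : ℕ) : ℝ :=
  (2 / n) * ∑ j ∈ Finset.range k,
    (1 / ((n - 1).choose j : ℝ)) * ((1 / 2 ^ n) * ∑ i ∈ Finset.Icc (j + 1) n, (n.choose i : ℝ))

open Finset

namespace Nat

theorem choose_pred_mul_choose_succ_le {n j i : ℕ} (hji : j < i) (hin : i < n) :
    (n - 1).choose j * n.choose (i + 1) ≤ (n - 1).choose (j + 1) * n.choose i := by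
  refine Nat.le_of_mul_le_mul_right (c := (j + 1) * (i + 1)) ?_ (by positivity)
  have hn : n.choose (i + 1) * (i + 1) = n.choose i * (n - i) := choose_succ_right_eq n i
  have hn1 : (n - 1).choose (j + 1) * (j + 1) = (n - 1).choose j * (n - 1 - j) :=
    choose_succ_right_eq (n - 1) j
  calc (n - 1).choose j * n.choose (i + 1) * ((j + 1) * (i + 1))
      = (n - 1).choose j * (n.choose (i + 1) * (i + 1)) * (j + 1) := by ring
    _ = (n - 1).choose j * n.choose i * ((n - i) * (j + 1)) := by rw [hn]; ring
    _ ≤ (n - 1).choose j * n.choose i * ((n - 1 - j) * (i + 1)) :=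
        Nat.mul_le_mul_left _ (Nat.mul_le_mul (by omega) (by omega))
    _ = (n - 1).choose (j + 1) * (j + 1) * n.choose i * (i + 1) := by rw [hn1]; ring
    _ = (n - 1).choose (j + 1) * n.choose i * ((j + 1) * (i + 1)) := by ring

theorem choose_pred_mul_tail_lt {n j : ℕ} (h : j + 2 ≤ n) :
    (n - 1).choose j * ∑ i ∈ Icc (j + 2) n, n.choose i
      < (n - 1).choose (j + 1) * ∑ i ∈ Icc (j + 1) n, n.choose i := by
  have hshift : Icc (j + 2) n = (Icc (j + 1) (n - 1)).map (addRightEmbedding 1) := by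
    rw [map_add_right_Icc]; congr 1; omega
  have htop : ∑ i ∈ Icc (j + 1) n, n.choose i = ∑ i ∈ Icc (j + 1) (n - 1), n.choose i + 1 := by
    have := sum_Icc_succ_top (show j + 1 ≤ n - 1 + 1 by omega) (n.choose ·)
    rwa [Nat.sub_add_cancel (by omega : 1 ≤ n), choose_self] at this
  calc (n - 1).choose j * ∑ i ∈ Icc (j + 2) n, n.choose i
      = ∑ i ∈ Icc (j + 1) (n - 1), (n - 1).choose j * n.choose (i + 1) := by
        rw [hshift, sum_map, mul_sum]; rfl
    _ ≤ ∑ i ∈ Icc (j + 1) (n - 1), (n - 1).choose (j + 1) * n.choose i :=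
        sum_le_sum fun i hi ↦
          choose_pred_mul_choose_succ_le (by simp at hi; omega) (by simp at hi; omega)
    _ < (n - 1).choose (j + 1) * ∑ i ∈ Icc (j + 1) n, n.choose i := by
        rw [htop, ← mul_sum]
        exact Nat.mul_lt_mul_of_pos_left (by omega) (choose_pos (by omega))

end Nat

noncomputable def cubeResStep (n j : ℕ) : ℝ :=
  (1 / ((n - 1).choose j : ℝ)) * ((1 / 2 ^ n) * ∑ i ∈ Icc (j + 1) n, (n.choose i : ℝ))

theorem cubeRes_eq_sum (n k : ℕ) : cubeRes n k = 2 / n * ∑ j ∈ range k, cubeResStep n j := rfl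

theorem cubeRes_add_two_sub_two_mul_add (n j : ℕ) :
    cubeRes n (j + 2) - 2 * cubeRes n (j + 1) + cubeRes n j
      = 2 / n * (cubeResStep n (j + 1) - cubeResStep n j) := by
  simp only [cubeRes_eq_sum, sum_range_succ]
  ring

theorem cubeResStep_succ_lt {n j : ℕ} (h : j + 2 ≤ n) :
    cubeResStep n (j + 1) < cubeResStep n j := by
  have hC₀ : (0 : ℝ) < (n - 1).choose j := mod_cast Nat.choose_pos (by omega)
  have hC₁ : (0 : ℝ) < (n - 1).choose (j + 1) := mod_cast Nat.choose_pos (by omega)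
  have key : ((n - 1).choose j : ℝ) * ∑ i ∈ Icc (j + 2) n, (n.choose i : ℝ)
      < (n - 1).choose (j + 1) * ∑ i ∈ Icc (j + 1) n, (n.choose i : ℝ) :=
    mod_cast Nat.choose_pred_mul_tail_lt h
  calc cubeResStep n (j + 1)
      = 1 / 2 ^ n * ((∑ i ∈ Icc (j + 2) n, (n.choose i : ℝ)) / (n - 1).choose (j + 1)) := by
        unfold cubeResStep; ring
    _ < 1 / 2 ^ n * ((∑ i ∈ Icc (j + 1) n, (n.choose i : ℝ)) / (n - 1).choose j) := by
        refine mul_lt_mul_of_pos_left ?_ (by positivity)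
        rw [div_lt_div_iff₀ hC₁ hC₀]
        linarith
    _ = cubeResStep n j := by unfold cubeResStep; ring

theorem stmt_19 (n k : ℕ) (hk : 2 ≤ k) (hkn : k ≤ n) :
    cubeRes n k - 2 * cubeRes n (k - 1) + cubeRes n (k - 2) < 0 := by
  obtain ⟨j, rfl⟩ : ∃ j, k = j + 2 := ⟨k - 2, by omega⟩
  rw [show j + 2 - 1 = j + 1 by omega, Nat.add_sub_cancel, cubeRes_add_two_sub_two_mul_add]
  have hn : (0 : ℝ) < n := mod_cast (by omega : 0 < n)
  exact mul_neg_of_pos_of_neg (by positivity) (sub_neg.2 (cubeResStep_succ_lt hkn))
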